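/- arXiv:1405.6854 — 2 statements merged into one kernel-verified Lean document; each statement's English description precedes it below -/
import Mathlib

section
/- The operation T ⋆ S defined on planar rooted trees by grafting S as a new subtree of the root of T in each possible position (i.e., if T = B₊(r, T₁…Tₙ), then T ⋆ S = Σ_{i=0}^{n} B₊(r, T₁…Tᵢ S Tᵢ₊₁…Tₙ)) satisfies the right non-associative permutative (right NAP) identity: (T ⋆ S) ⋆ U = (T ⋆ U) ⋆ S for all planar rooted trees T, S, U. -/
/-!
Writing `T = B₊(l)`, both sides are the sum of `B₊(l')` over all ways of inserting the two new
subtrees into `l`, one after the other. Inserting `x` at `i` and then `y` at `j` yields the same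
list as inserting `y` first at `j` (if `j ≤ i`) or `j - 1` (if `i < j`) and then `x` at the
shifted position; this reindexing is an involution of the index pairs, so the two sums agree.
-/

/-- Planar rooted trees: a root together with an ordered (planar) list of subtrees. -/
inductive PTree : Type
  | node : List PTree → PTree

namespace PTree

/-- `T ⋆ S` : the sum, in the vector space spanned by planar rooted trees, of all
trees obtained by inserting `S` as a new child subtree of the root of `T`, in each
possible position.  If `T = B₊(T₁ … Tₙ)` then
`T ⋆ S = Σ_{i=0}^{n} B₊(T₁ … Tᵢ S Tᵢ₊₁ … Tₙ)`. -/
noncomputable def star (T S : PTree) : PTree →₀ ℚ :=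
  match T with
  | node l => ∑ i ∈ Finset.range (l.length + 1), Finsupp.single (node (l.insertIdx i S)) 1

/-- Linear extension of `⋆` in its first argument. -/
noncomputable def starL (x : PTree →₀ ℚ) (U : PTree) : PTree →₀ ℚ :=
  x.sum fun T c => c • star T U

end PTree

open Finset

namespace List

def insertIdxPairSwap (p : ℕ × ℕ) : ℕ × ℕ :=
  if p.2 ≤ p.1 then (p.2, p.1 + 1) else (p.2 - 1, p.1)

theorem insertIdxPairSwap_involutive : Function.Involutive insertIdxPairSwap := by
  rintro ⟨i, j⟩
  simp only [insertIdxPairSwap]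
  split_ifs <;> dsimp only at * <;> ext <;> dsimp only <;> omega

theorem insertIdxPairSwap_mem {n : ℕ} {p : ℕ × ℕ}
    (hp : p ∈ Finset.range (n + 1) ×ˢ Finset.range (n + 2)) :
    insertIdxPairSwap p ∈ Finset.range (n + 1) ×ˢ Finset.range (n + 2) := by
  simp only [Finset.mem_product, Finset.mem_range] at hp ⊢
  dsimp only [insertIdxPairSwap]
  split_ifs <;> dsimp only <;> omega

theorem insertIdx_insertIdx_eq_insertIdxPairSwap {α : Type*} (x y : α) (l : List α) {p : ℕ × ℕ}
    (hp₁ : p.1 ≤ l.length) (hp₂ : p.2 ≤ l.length + 1) :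
    (l.insertIdx p.1 x).insertIdx p.2 y =
      (l.insertIdx (insertIdxPairSwap p).1 y).insertIdx (insertIdxPairSwap p).2 x := by
  obtain ⟨i, j⟩ := p
  dsimp only [insertIdxPairSwap] at hp₁ hp₂ ⊢
  split_ifs with h
  · exact (insertIdx_comm y x h hp₁).symm
  · obtain ⟨k, rfl⟩ : ∃ k, j = k + 1 := ⟨j - 1, by omega⟩
    exact insertIdx_comm x y (by omega) (by omega)

theorem sum_insertIdx_insertIdx_comm {α M : Type*} [AddCommMonoid M] (f : List α → M)
    (l : List α) (x y : α) :
    ∑ p ∈ Finset.range (l.length + 1) ×ˢ Finset.range (l.length + 2),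
        f ((l.insertIdx p.1 x).insertIdx p.2 y) =
      ∑ p ∈ Finset.range (l.length + 1) ×ˢ Finset.range (l.length + 2),
        f ((l.insertIdx p.1 y).insertIdx p.2 x) :=
  sum_nbij' insertIdxPairSwap insertIdxPairSwap (fun _ ↦ insertIdxPairSwap_mem)
    (fun _ ↦ insertIdxPairSwap_mem) (fun p _ ↦ insertIdxPairSwap_involutive p)
    (fun p _ ↦ insertIdxPairSwap_involutive p) fun p hp ↦ by
      simp only [Finset.mem_product, Finset.mem_range] at hp
      rw [insertIdx_insertIdx_eq_insertIdxPairSwap x y l (by omega) (by omega)]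

end List

namespace PTree

theorem starL_eq_linearCombination (x : PTree →₀ ℚ) (U : PTree) :
    starL x U = Finsupp.linearCombination ℚ (star · U) x :=
  (Finsupp.linearCombination_apply ℚ x).symm

theorem starL_sum_single_one {ι : Type*} (s : Finset ι) (f : ι → PTree) (U : PTree) :
    starL (∑ i ∈ s, Finsupp.single (f i) (1 : ℚ)) U = ∑ i ∈ s, star (f i) U := by
  simp only [starL_eq_linearCombination, map_sum, Finsupp.linearCombination_single, one_smul]

theorem starL_star_node (l : List PTree) (X Y : PTree) :
    starL (star (node l) X) Y =
      ∑ p ∈ range (l.length + 1) ×ˢ range (l.length + 2),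
        Finsupp.single (node ((l.insertIdx p.1 X).insertIdx p.2 Y)) (1 : ℚ) := by
  rw [star, starL_sum_single_one, sum_product]
  refine sum_congr rfl fun i hi ↦ ?_
  rw [star, List.length_insertIdx_of_le_length (Nat.lt_succ_iff.mp (mem_range.mp hi))]

end PTree

/-- The grafting product `⋆` on planar rooted trees satisfies the right
non-associative permutative (right NAP) identity `(T ⋆ S) ⋆ U = (T ⋆ U) ⋆ S`. -/
theorem star_right_nap (T S U : PTree) :
    PTree.starL (PTree.star T S) U = PTree.starL (PTree.star T U) S := by
  obtain ⟨l⟩ := T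
  rw [PTree.starL_star_node, PTree.starL_star_node]
  exact List.sum_insertIdx_insertIdx_comm (fun t ↦ Finsupp.single (PTree.node t) 1) l S U
end

section
/- The symmetrization map φ from non-planar rooted trees to linear combinations of planar rooted trees, defined recursively by φ(•) = • and φ(B₊(r, T₁⋯T_k)) = B₊(r, φ(T₁) ⧢ ⋯ ⧢ φ(T_k)) (shuffle product of the children), sends each non-planar rooted tree T to the sum of all its distinct planar representatives, each appearing with coefficient 1. -/
open scoped Classical

/-- Planar rooted trees with vertices labelled in `A`. -/
inductive LP (A : Type) : Type
  | node : A → List (LP A) → LP A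

namespace LP

variable {A : Type}

/-- The list of labels of the vertices of a planar tree (root first). -/
def labels : LP A → List A
  | node a l => a :: (l.attach.map fun t => labels t.1).flatten
decreasing_by
  have := List.sizeOf_lt_of_mem t.2
  simp only [LP.node.sizeOf_spec]
  omega

/-- Shuffle a single tree `t` into a linear combination of forests: `[t] ⧢ x`. -/
noncomputable def shInsert (t : LP A) (x : List (LP A) →₀ ℤ) : List (LP A) →₀ ℤ :=
  x.sum fun l c =>
    c • ∑ i ∈ Finset.range (l.length + 1), Finsupp.single (l.insertIdx i t) 1

/-- The shuffle product `x₁ ⧢ x₂ ⧢ ⋯ ⧢ x_k` of linear combinations of trees, as a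
linear combination of forests. -/
noncomputable def shuffleAll : List (LP A →₀ ℤ) → (List (LP A) →₀ ℤ)
  | [] => Finsupp.single [] 1
  | x :: xs => x.sum fun t c => c • shInsert t (shuffleAll xs)

/-- The symmetrization map `φ`, defined recursively by `φ(•) = •` and
`φ(B₊(r, T₁⋯T_k)) = B₊(r, φ(T₁) ⧢ ⋯ ⧢ φ(T_k))`. -/
noncomputable def phi : LP A → (LP A →₀ ℤ)
  | node a l => Finsupp.mapDomain (node a) (shuffleAll (l.attach.map fun t => phi t.1))
decreasing_by
  have := List.sizeOf_lt_of_mem t.2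
  simp only [LP.node.sizeOf_spec]
  omega

/-- Two planar labelled trees are planar representatives of the same non-planar tree
iff they agree up to permuting the children lists (recursively). -/
inductive PEq : LP A → LP A → Prop
  | node (a : A) (l l' l'' : List (LP A)) :
      List.Forall₂ PEq l l'' → l''.Perm l' → PEq (node a l) (node a l')

end LP

/-! By induction on the tree it suffices to show that the coefficient of a forest `ls` in
`φ(t₁) ⧢ ⋯ ⧢ φ(t_k)` is `1` if `ls` is a reordering of representatives of `t₁, …, t_k` and `0`
otherwise. Inducting on `k`, the terms of `φ(t₁) ⧢ (φ(t₂) ⧢ ⋯ ⧢ φ(t_k))` contributing to `ls`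
are the triples `(s, m, i)` with `s` a representative of `t₁`, `m` a representative of the
remaining forest and `ls = m.insertIdx i s`. Such a triple exists iff `ls` represents the forest,
and it is unique: since the labels are distinct, the root label of `t₁` occurs as a root in `ls`
only at position `i`. -/

namespace List

variable {α β : Type*}

theorem getElem_insertIdx_mem_of_ne {l : List α} {x : α} {i j : ℕ}
    (hj : j < (l.insertIdx i x).length) (hji : j ≠ i) : (l.insertIdx i x)[j] ∈ l := by
  rw [getElem_insertIdx]
  split_ifs <;> exact getElem_mem _

theorem eq_of_insertIdx_eq_insertIdx {f : α → β} {l l' : List α} {a a' : α} {i i' : ℕ}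
    (hi : i ≤ l.length) (ha' : f a' ∉ l'.map f) (hf : f a = f a')
    (h : l.insertIdx i a = l'.insertIdx i' a') : i = i' ∧ a = a' ∧ l = l' := by
  have hlt : i < (l.insertIdx i a).length := by rw [length_insertIdx_of_le_length hi]; omega
  have hget : (l.insertIdx i a)[i] = a := getElem_insertIdx_self hlt
  have hii' : i = i' := by
    by_contra hne
    have hmem : (l'.insertIdx i' a')[i]'(h ▸ hlt) ∈ l' := getElem_insertIdx_mem_of_ne _ hne
    simp only [← h, hget] at hmem
    exact ha' (hf ▸ mem_map_of_mem hmem)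
  subst hii'
  refine ⟨rfl, ?_, ?_⟩
  · simpa only [h, getElem_insertIdx_self] using hget.symm
  · simpa only [eraseIdx_insertIdx_self] using congrArg (eraseIdx · i) h

theorem perm_cons_iff_exists_insertIdx {l l' : List α} {a : α} :
    l ~ a :: l' ↔ ∃ m i, m ~ l' ∧ i ≤ m.length ∧ m.insertIdx i a = l := by
  constructor
  · intro hperm
    obtain ⟨i, hi, rfl⟩ := mem_iff_getElem.mp (hperm.mem_iff.mpr mem_cons_self)
    refine ⟨l.eraseIdx i, i, ?_, by rw [length_eraseIdx_of_lt hi]; omega,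
      insertIdx_eraseIdx_getElem hi⟩
    exact ((getElem_cons_eraseIdx_perm hi).trans hperm).cons_inv
  · rintro ⟨m, i, hm, hi, rfl⟩
    exact (perm_insertIdx a m hi).trans (hm.cons a)

end List

namespace LP

variable {A : Type}

def root : LP A → A
  | node a _ => a

theorem root_mem_labels (t : LP A) : t.root ∈ t.labels := by
  cases t
  rw [labels]
  exact List.mem_cons_self

theorem labels_node (a : A) (l : List (LP A)) :
    labels (node a l) = a :: (l.map labels).flatten := by
  rw [labels, List.attach_map_val (l := l) (f := labels)]

theorem PEq.root_eq {s t : LP A} (h : PEq s t) : s.root = t.root := by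
  cases h; rfl

@[elab_as_elim]
theorem induction {motive : LP A → Prop}
    (node : ∀ a l, (∀ t ∈ l, motive t) → motive (node a l)) : ∀ t, motive t
  | .node a l => node a l fun t _ => induction node t
decreasing_by
  have := List.sizeOf_lt_of_mem ‹t ∈ l›
  simp only [LP.node.sizeOf_spec]
  omega

def ForestRep (ls l : List (LP A)) : Prop :=
  Relation.Comp (List.Forall₂ PEq) List.Perm ls l

theorem peq_node_iff {a b : A} {l l' : List (LP A)} :
    PEq (node b l') (node a l) ↔ b = a ∧ ForestRep l' l := by
  constructor
  · rintro ⟨_, _, _, l'', hrep, hperm⟩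
    exact ⟨rfl, l'', hrep, hperm⟩
  · rintro ⟨rfl, l'', hrep, hperm⟩
    exact .node b l' l l'' hrep hperm

theorem forestRep_iff_perm_comp {ls l : List (LP A)} :
    ForestRep ls l ↔ Relation.Comp List.Perm (List.Forall₂ PEq) ls l := by
  rw [ForestRep, List.forall₂_comp_perm_eq_perm_comp_forall₂]

theorem forestRep_nil_iff {ls : List (LP A)} : ForestRep ls [] ↔ ls = [] := by
  simp [forestRep_iff_perm_comp, Relation.Comp]

theorem forestRep_cons_iff {ls rest : List (LP A)} {t : LP A} :
    ForestRep ls (t :: rest) ↔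
      ∃ s m i, PEq s t ∧ ForestRep m rest ∧ i ≤ m.length ∧ m.insertIdx i s = ls := by
  simp only [forestRep_iff_perm_comp, Relation.Comp, List.forall₂_cons_right_iff]
  constructor
  · rintro ⟨_, hperm, s, m', hst, hrep, rfl⟩
    obtain ⟨m, i, hm, hi, rfl⟩ := List.perm_cons_iff_exists_insertIdx.mp hperm
    exact ⟨s, m, i, hst, ⟨m', hm, hrep⟩, hi, rfl⟩
  · rintro ⟨s, m, i, hst, ⟨m', hm, hrep⟩, hi, rfl⟩
    exact ⟨s :: m', List.perm_cons_iff_exists_insertIdx.mpr ⟨m, i, hm, hi, rfl⟩,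
      s, m', hst, hrep, rfl⟩

theorem ForestRep.map_root_perm {ls l : List (LP A)} (h : ForestRep ls l) :
    (ls.map root).Perm (l.map root) := by
  obtain ⟨l'', hrep, hperm⟩ := h
  have : ls.map root = l''.map root := by
    rw [← List.forall₂_eq_eq_eq, List.forall₂_map_left_iff, List.forall₂_map_right_iff]
    exact hrep.imp fun _ _ => PEq.root_eq
  exact this ▸ hperm.map root

theorem root_notMem_map_root {t : LP A} {rest m : List (LP A)}
    (hn : (t.labels ++ (rest.map labels).flatten).Nodup) (hm : ForestRep m rest) :
    t.root ∉ m.map root := by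
  rw [hm.map_root_perm.mem_iff]
  intro h
  obtain ⟨y, hy, hyt⟩ := List.mem_map.mp h
  exact List.disjoint_of_nodup_append hn (root_mem_labels t)
    (List.mem_flatten.mpr ⟨_, List.mem_map_of_mem hy, hyt ▸ root_mem_labels y⟩)

theorem insertIdx_eq_insertIdx_iff {t s s₀ : LP A} {rest m m₀ : List (LP A)} {i i₀ : ℕ}
    (hn : (t.labels ++ (rest.map labels).flatten).Nodup) (hs : PEq s t) (hs₀ : PEq s₀ t)
    (hm₀ : ForestRep m₀ rest) (hi : i ≤ m.length) :
    m.insertIdx i s = m₀.insertIdx i₀ s₀ ↔ s = s₀ ∧ m = m₀ ∧ i = i₀ := by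
  constructor
  · intro h
    obtain ⟨rfl, rfl, rfl⟩ := List.eq_of_insertIdx_eq_insertIdx hi
      (hs₀.root_eq ▸ root_notMem_map_root hn hm₀) (hs.root_eq.trans hs₀.root_eq.symm) h
    exact ⟨rfl, rfl, rfl⟩
  · rintro ⟨rfl, rfl, rfl⟩
    rfl

theorem shuffleAll_cons_apply (x : LP A →₀ ℤ) (xs : List (LP A →₀ ℤ)) (ls : List (LP A)) :
    shuffleAll (x :: xs) ls = ∑ s ∈ x.support, ∑ m ∈ (shuffleAll xs).support,
      ∑ i ∈ Finset.range (m.length + 1),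
        if m.insertIdx i s = ls then x s * shuffleAll xs m else 0 := by
  simp [shuffleAll, shInsert, Finsupp.sum, Finsupp.finsetSum_apply, Finsupp.single_apply,
    Finset.mul_sum]

theorem phi_node_apply (a b : A) (l ls : List (LP A)) :
    phi (node a l) (node b ls) = if b = a then shuffleAll (l.map phi) ls else 0 := by
  rw [phi, List.attach_map_val (l := l) (f := phi)]
  split_ifs with hb
  · exact hb ▸ Finsupp.mapDomain_apply (fun _ _ h => by injection h) _ ls
  · refine Finsupp.mapDomain_of_notMem_range _ _ ?_
    rintro ⟨_, h⟩
    injection h with h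
    exact hb h.symm

theorem shuffleAll_map_phi_apply (l : List (LP A)) (hl : (l.map labels).flatten.Nodup)
    (hphi : ∀ t ∈ l, ∀ s, phi t s = if PEq s t then 1 else 0) (ls : List (LP A)) :
    shuffleAll (l.map phi) ls = if ForestRep ls l then 1 else 0 := by
  induction l generalizing ls with
  | nil => simp [shuffleAll, forestRep_nil_iff, Finsupp.single_apply, eq_comm]
  | cons t rest ih =>
    rw [List.map_cons, List.flatten_cons] at hl
    have ht := hphi t List.mem_cons_self
    have hrest := ih hl.of_append_right fun t' ht' => hphi t' (List.mem_cons_of_mem t ht')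
    have mem_support_phi {s} : s ∈ (phi t).support ↔ PEq s t := by simp [ht]
    have mem_support_rest {m} : m ∈ (shuffleAll (rest.map phi)).support ↔ ForestRep m rest := by
      simp [hrest]
    rw [List.map_cons, shuffleAll_cons_apply]
    by_cases hls : ForestRep ls (t :: rest)
    · obtain ⟨s₀, m₀, i₀, hs₀, hm₀, hi₀, rfl⟩ := forestRep_cons_iff.mp hls
      rw [if_pos hls]
      calc _ = ∑ s ∈ (phi t).support, ∑ m ∈ (shuffleAll (rest.map phi)).support,
              ∑ i ∈ Finset.range (m.length + 1),
                if s = s₀ ∧ m = m₀ ∧ i = i₀ then (1 : ℤ) else 0 := by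
            refine Finset.sum_congr rfl fun s hs => Finset.sum_congr rfl fun m hm =>
              Finset.sum_congr rfl fun i hi => ?_
            rw [mem_support_phi] at hs
            rw [mem_support_rest] at hm
            rw [ht, hrest, if_pos hs, if_pos hm, mul_one]
            exact if_congr (insertIdx_eq_insertIdx_iff hl hs hs₀ hm₀
              (Nat.lt_succ_iff.mp (Finset.mem_range.mp hi))) rfl rfl
        _ = 1 := by
            simp [ite_and, mem_support_phi, mem_support_rest, hs₀, hm₀, hi₀]
    · rw [if_neg hls]
      refine Finset.sum_eq_zero fun s hs => Finset.sum_eq_zero fun m hm =>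
        Finset.sum_eq_zero fun i hi => if_neg fun h => hls ?_
      exact forestRep_cons_iff.mpr ⟨s, m, i, mem_support_phi.mp hs, mem_support_rest.mp hm,
        Nat.lt_succ_iff.mp (Finset.mem_range.mp hi), h⟩

end LP

/-- The symmetrization map `φ` sends each labelled planar rooted tree (with pairwise
distinct labels) to the sum of all the distinct planar representatives of its
underlying non-planar tree, each appearing with coefficient `1`:  the coefficient of
`s` in `φ(t)` is `1` if `s` is a planar representative of (the non-planar tree
underlying) `t`, and `0` otherwise. -/
theorem phi_eq_sum_planar_representatives {A : Type} (t : LP A)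
    (hnodup : (LP.labels t).Nodup) (s : LP A) :
    LP.phi t s = if LP.PEq s t then 1 else 0 := by
  induction t using LP.induction generalizing s with
  | node a l ih =>
    rw [LP.labels_node, List.nodup_cons] at hnodup
    have hphi : ∀ t ∈ l, ∀ s, LP.phi t s = if LP.PEq s t then 1 else 0 := fun t ht =>
      ih t ht ((List.nodup_flatten.mp hnodup.2).1 _ (List.mem_map_of_mem ht))
    obtain ⟨b, ls⟩ := s
    rw [LP.phi_node_apply, LP.peq_node_iff, LP.shuffleAll_map_phi_apply l hnodup.2 hphi]
    by_cases hb : b = a <;> simp [hb]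
end
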